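/- Let g be a Lie algebra with subalgebra h and complement m, and let f ∈ S^n(g)^G be a homogeneous degree-n invariant of the adjoint action of a connected group G with Lie algebra g. Write f = Σ_{a ≤ i ≤ b} f^{(n−i,i)} with f^{(n−i,i)} ∈ S^{n−i}(h) ⊗ S^i(m), f^{(n−b,b)} ≠ 0. Then the highest component f^{(n−b,b)}, viewed as an element of S^n(k) for the contraction k = h ⋉ mᵃ, is invariant under the coadjoint action of the corresponding connected group K, i.e., f^{(n−b,b)} ∈ S^n(k)^K = k[k*]^K_n. -/

import Mathlib

/-!
Grade `S(g) = k[X_i]` by the degree in the `m`-variables. For every `x`, the derivation of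
`S(g)` induced by `ad x` splits, via the projections `pH`, `pM` onto `𝔥` and `m`, into the
blocks `pM ∘ ad x ∘ pH`, `pH ∘ ad x ∘ pH + pM ∘ ad x ∘ pM` and `pH ∘ ad x ∘ pM`, which shift
the `m`-degree by `+1`, `0` and `-1`. Taking the component of degree `b + 1` of `ad x · f = 0`
shows that the raising block kills the top component `f^(b)`; for `x ∈ 𝔥` the raising block
vanishes, and the component of degree `b` shows that the diagonal block kills `f^(b)`. The
coadjoint action of `x` on `S(𝔨)` is the diagonal block of `ad (pH x)` plus the raising block
of `ad (pM x)`.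
-/

open MvPolynomial

theorem Finsupp.weight_natCast {σ : Type*} (w : σ → ℕ) (s : σ →₀ ℕ) :
    Finsupp.weight (fun i => (w i : ℤ)) s = Finsupp.weight w s := by
  simp [Finsupp.weight_apply, Finsupp.sum]

namespace MvPolynomial

variable {σ R M : Type*} [CommSemiring R] [AddCancelCommMonoid M]

def IsWeightedHomogeneousDerivation (w : σ → M) (d : M)
    (D : Derivation R (MvPolynomial σ R) (MvPolynomial σ R)) : Prop :=
  ∀ i, (D (X i)).IsWeightedHomogeneous w (w i + d)

namespace IsWeightedHomogeneousDerivation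

variable {w : σ → M} {d : M} {D : Derivation R (MvPolynomial σ R) (MvPolynomial σ R)}

theorem isWeightedHomogeneous_apply (hD : IsWeightedHomogeneousDerivation w d D)
    {p : MvPolynomial σ R} {c : M} (hp : p.IsWeightedHomogeneous w c) :
    (D p).IsWeightedHomogeneous w (c + d) := by
  induction hp using IsWeightedHomogeneous.induction_on with
  | zero => simpa using isWeightedHomogeneous_zero R w (c + d)
  | add p q _ _ hp hq => simpa using hp.add hq
  | monomial s r hs =>
    have hD_eq : D = mkDerivation R fun i => D (X i) :=
      derivation_ext fun i => (mkDerivation_X R (fun i => D (X i)) i).symm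
    rw [hD_eq, mkDerivation_monomial, ← mem_weightedHomogeneousSubmodule]
    refine Submodule.smul_mem _ _ (Submodule.finsuppSum_mem _ _ _ _ fun i hi => ?_)
    rw [smul_eq_mul, mem_weightedHomogeneousSubmodule, ← hs,
      ← Finsupp.weight_sub_single_add hi, add_assoc]
    exact (isWeightedHomogeneous_monomial w _ _ rfl).mul (hD i)

theorem weightedHomogeneousComponent_apply (hD : IsWeightedHomogeneousDerivation w d D)
    (c : M) (p : MvPolynomial σ R) :
    weightedHomogeneousComponent w (c + d) (D p) = D (weightedHomogeneousComponent w c p) := by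
  induction p using MvPolynomial.induction_on' with
  | monomial s r =>
    have hs := isWeightedHomogeneous_monomial w s r rfl
    by_cases hsc : Finsupp.weight w s = c
    · subst hsc
      rw [hs.weightedHomogeneousComponent_same,
        (hD.isWeightedHomogeneous_apply hs).weightedHomogeneousComponent_same]
    · rw [hs.weightedHomogeneousComponent_ne c (Ne.symm hsc), map_zero,
        (hD.isWeightedHomogeneous_apply hs).weightedHomogeneousComponent_ne _
          fun h => hsc (add_right_cancel h).symm]
  | add p q hp hq => simp only [map_add, hp, hq]

theorem weightedHomogeneousComponent_apply_eq_zero {w : σ → ℤ} {d b c : ℤ}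
    {D : Derivation R (MvPolynomial σ R) (MvPolynomial σ R)}
    (hD : IsWeightedHomogeneousDerivation w d D) (hc : b + d < c) {p : MvPolynomial σ R}
    (hp : ∀ c', b < c' → weightedHomogeneousComponent w c' p = 0) :
    weightedHomogeneousComponent w c (D p) = 0 := by
  rw [show c = c - d + d by ring, hD.weightedHomogeneousComponent_apply, hp _ (by omega),
    map_zero]

end IsWeightedHomogeneousDerivation

theorem weightedHomogeneousComponent_natCast (w : σ → ℕ) (c : ℕ) (p : MvPolynomial σ R) :
    weightedHomogeneousComponent (fun i => (w i : ℤ)) c p = weightedHomogeneousComponent w c p := by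
  classical
  ext s
  simp only [coeff_weightedHomogeneousComponent, Finsupp.weight_natCast, Nat.cast_inj]

end MvPolynomial

theorem eq_add_add_of_add_eq_one {A : Type*} [Semiring A] {p q : A} (h : p + q = 1) (a : A) :
    a = q * a * p + (p * a * p + q * a * q) + p * a * q := by
  calc a = (p + q) * a * (p + q) := by rw [h, one_mul, mul_one]
    _ = _ := by simp only [add_mul, mul_add]; abel

section Contraction

variable {k g ιh ιm : Type*} [CommRing k] [LieRing g] [LieAlgebra k g]

def mWeight : ιh ⊕ ιm → ℤ := Sum.elim 0 1

variable (e : Module.Basis (ιh ⊕ ιm) k g)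

noncomputable def projH : Module.End k g := e.constr k (Sum.elim (fun j => e (Sum.inl j)) 0)

noncomputable def projM : Module.End k g := e.constr k (Sum.elim 0 fun j => e (Sum.inr j))

@[simp] theorem projH_inl (j : ιh) : projH e (e (Sum.inl j)) = e (Sum.inl j) := by simp [projH]
@[simp] theorem projH_inr (j : ιm) : projH e (e (Sum.inr j)) = 0 := by simp [projH]
@[simp] theorem projM_inl (j : ιh) : projM e (e (Sum.inl j)) = 0 := by simp [projM]
@[simp] theorem projM_inr (j : ιm) : projM e (e (Sum.inr j)) = e (Sum.inr j) := by simp [projM]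

theorem projH_add_projM : projH e + projM e = 1 :=
  e.ext fun i => by rcases i with j | j <;> simp

/-- `e.constr k X : g → S(g)` is the inclusion of `g` as the linear polynomials. -/
noncomputable def derivationOfEnd :
    Module.End k g →ₗ[k] Derivation k (MvPolynomial (ιh ⊕ ιm) k) (MvPolynomial (ιh ⊕ ιm) k) :=
  (mkDerivationEquiv k).toLinearMap ∘ₗ LinearMap.pi fun i => e.constr k X ∘ₗ LinearMap.applyₗ (e i)

@[simp]
theorem derivationOfEnd_X (φ : Module.End k g) (i : ιh ⊕ ιm) :
    derivationOfEnd e φ (X i) = e.constr k X (φ (e i)) := by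
  simp [derivationOfEnd, mkDerivationEquiv]

theorem constr_projH_isWeightedHomogeneous [Fintype ιh] [Fintype ιm] (v : g) :
    (e.constr k (X (R := k)) (projH e v)).IsWeightedHomogeneous mWeight 0 := by
  rw [← e.sum_repr v, map_sum, map_sum, ← mem_weightedHomogeneousSubmodule k]
  refine Submodule.sum_mem _ fun i _ => ?_
  rw [map_smul, map_smul]
  refine Submodule.smul_mem _ _ ?_
  rcases i with j | j
  · rw [projH_inl, e.constr_basis]
    exact isWeightedHomogeneous_X k mWeight (Sum.inl j)
  · simp

theorem constr_projM_isWeightedHomogeneous [Fintype ιh] [Fintype ιm] (v : g) :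
    (e.constr k (X (R := k)) (projM e v)).IsWeightedHomogeneous mWeight 1 := by
  rw [← e.sum_repr v, map_sum, map_sum, ← mem_weightedHomogeneousSubmodule k]
  refine Submodule.sum_mem _ fun i _ => ?_
  rw [map_smul, map_smul]
  refine Submodule.smul_mem _ _ ?_
  rcases i with j | j
  · simp
  · rw [projM_inr, e.constr_basis]
    exact isWeightedHomogeneous_X k mWeight (Sum.inr j)

variable [Fintype ιh] [Fintype ιm]

theorem isWeightedHomogeneousDerivation_raise (ψ : Module.End k g) :
    IsWeightedHomogeneousDerivation mWeight 1 (derivationOfEnd e (projM e * ψ * projH e)) := by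
  rintro (j | j)
  · simpa [mWeight] using constr_projM_isWeightedHomogeneous e (ψ (e (Sum.inl j)))
  · simpa using isWeightedHomogeneous_zero k mWeight _

theorem isWeightedHomogeneousDerivation_diag (ψ : Module.End k g) :
    IsWeightedHomogeneousDerivation mWeight 0
      (derivationOfEnd e (projH e * ψ * projH e + projM e * ψ * projM e)) := by
  rintro (j | j)
  · simpa [mWeight] using constr_projH_isWeightedHomogeneous e (ψ (e (Sum.inl j)))
  · simpa [mWeight] using constr_projM_isWeightedHomogeneous e (ψ (e (Sum.inr j)))

theorem isWeightedHomogeneousDerivation_lower (ψ : Module.End k g) :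
    IsWeightedHomogeneousDerivation mWeight (-1) (derivationOfEnd e (projH e * ψ * projM e)) := by
  rintro (j | j)
  · simpa using isWeightedHomogeneous_zero k mWeight _
  · simpa [mWeight] using constr_projH_isWeightedHomogeneous e (ψ (e (Sum.inr j)))

variable {e} {f : MvPolynomial (ιh ⊕ ιm) k} {b : ℤ} {ψ : Module.End k g}

theorem derivationOfEnd_raise_apply_eq_zero
    (hf : ∀ c, b < c → weightedHomogeneousComponent mWeight c f = 0)
    (hψ : derivationOfEnd e ψ f = 0) :
    derivationOfEnd e (projM e * ψ * projH e) (weightedHomogeneousComponent mWeight b f) = 0 := by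
  have h := congrArg (weightedHomogeneousComponent mWeight (b + 1)) hψ
  rwa [eq_add_add_of_add_eq_one (projH_add_projM e) ψ, map_add, map_add, Derivation.add_apply,
    Derivation.add_apply, map_add, map_add,
    (isWeightedHomogeneousDerivation_raise e ψ).weightedHomogeneousComponent_apply,
    (isWeightedHomogeneousDerivation_diag e ψ).weightedHomogeneousComponent_apply_eq_zero
      (by omega) hf,
    (isWeightedHomogeneousDerivation_lower e ψ).weightedHomogeneousComponent_apply_eq_zero
      (by omega) hf, add_zero, add_zero, map_zero] at h

theorem derivationOfEnd_diag_apply_eq_zero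
    (hf : ∀ c, b < c → weightedHomogeneousComponent mWeight c f = 0)
    (hψ : derivationOfEnd e ψ f = 0) (hraise : projM e * ψ * projH e = 0) :
    derivationOfEnd e (projH e * ψ * projH e + projM e * ψ * projM e)
      (weightedHomogeneousComponent mWeight b f) = 0 := by
  have h := congrArg (weightedHomogeneousComponent mWeight (b + 0)) hψ
  rwa [eq_add_add_of_add_eq_one (projH_add_projM e) ψ, hraise, zero_add, map_add,
    Derivation.add_apply, map_add,
    (isWeightedHomogeneousDerivation_diag e ψ).weightedHomogeneousComponent_apply,
    (isWeightedHomogeneousDerivation_lower e ψ).weightedHomogeneousComponent_apply_eq_zero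
      (by omega) hf, add_zero, map_zero] at h

variable {𝔥 : LieSubalgebra k g} {m : Submodule k g}

theorem projH_mem (he_h : ∀ j, e (Sum.inl j) ∈ 𝔥) (v : g) : projH e v ∈ 𝔥 := by
  rw [← e.sum_repr v, map_sum]
  refine sum_mem fun i _ => ?_
  rw [map_smul]
  rcases i with j | j
  · simpa using 𝔥.smul_mem _ (he_h j)
  · simp

theorem projM_mem (he_m : ∀ j, e (Sum.inr j) ∈ m) (v : g) : projM e v ∈ m := by
  rw [← e.sum_repr v, map_sum]
  refine sum_mem fun i _ => ?_
  rw [map_smul]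
  rcases i with j | j
  · simp
  · simpa using m.smul_mem _ (he_m j)

theorem projM_eq_zero_of_mem (hdisj : Disjoint 𝔥.toSubmodule m)
    (he_h : ∀ j, e (Sum.inl j) ∈ 𝔥) (he_m : ∀ j, e (Sum.inr j) ∈ m) {u : g} (hu : u ∈ 𝔥) :
    projM e u = 0 := by
  have hsum : projH e u + projM e u = u := LinearMap.congr_fun (projH_add_projM e) u
  refine Submodule.disjoint_def.mp hdisj _ ?_ (projM_mem he_m u)
  rw [eq_sub_of_add_eq' hsum]
  exact 𝔥.toSubmodule.sub_mem hu (projH_mem he_h u)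

theorem projH_eq_self_of_mem (hdisj : Disjoint 𝔥.toSubmodule m)
    (he_h : ∀ j, e (Sum.inl j) ∈ 𝔥) (he_m : ∀ j, e (Sum.inr j) ∈ m) {u : g} (hu : u ∈ 𝔥) :
    projH e u = u := by
  simpa [projM_eq_zero_of_mem hdisj he_h he_m hu] using
    LinearMap.congr_fun (projH_add_projM e) u

theorem eq_derivationOfEnd_of_contraction (hdisj : Disjoint 𝔥.toSubmodule m)
    (he_h : ∀ j, e (Sum.inl j) ∈ 𝔥) (he_m : ∀ j, e (Sum.inr j) ∈ m)
    {D : Derivation k (MvPolynomial (ιh ⊕ ιm) k) (MvPolynomial (ιh ⊕ ιm) k)} {x : g}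
    (hD : ∀ i, D (X i) = e.constr k X (⁅projH e x, projH e (e i)⁆
      + projM e ⁅projH e x, projM e (e i)⁆ - projM e ⁅projH e (e i), projM e x⁆)) :
    D = derivationOfEnd e (projH e * LieAlgebra.ad k g (projH e x) * projH e
      + projM e * LieAlgebra.ad k g (projH e x) * projM e
      + projM e * LieAlgebra.ad k g (projM e x) * projH e) := by
  refine derivation_ext fun i => ?_
  rw [hD, derivationOfEnd_X]
  congr 1
  simp only [LinearMap.add_apply, Module.End.mul_apply, LieAlgebra.ad_apply,
    projH_eq_self_of_mem hdisj he_h he_m (𝔥.lie_mem (projH_mem he_h x) (projH_mem he_h _))]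
  rw [← lie_skew (projH e (e i)) (projM e x), map_neg, sub_neg_eq_add]

end Contraction

theorem statement_3_general {k g : Type*} [Field k]
    [LieRing g] [LieAlgebra k g]
    {ιh ιm : Type*} [Fintype ιh] [Fintype ιm]
    (𝔥 : LieSubalgebra k g) (m : Submodule k g)
    (hc : IsCompl 𝔥.toSubmodule m)
    (e : Module.Basis (ιh ⊕ ιm) k g)
    (he_h : ∀ j, e (Sum.inl j) ∈ 𝔥) (he_m : ∀ j, e (Sum.inr j) ∈ m)
    (lin : g →ₗ[k] MvPolynomial (ιh ⊕ ιm) k)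
    (hlin : ∀ v, lin v = ∑ i, (e.repr v i) • X i)
    (pH pM : g →ₗ[k] g)
    (hpH : ∀ v, pH v = ∑ j : ιh, e.repr v (Sum.inl j) • e (Sum.inl j))
    (hpM : ∀ v, pM v = ∑ j : ιm, e.repr v (Sum.inr j) • e (Sum.inr j))
    (brq : g → g → g)
    (hbrq : ∀ x y, brq x y = ⁅pH x, pH y⁆ + pM ⁅pH x, pM y⁆ - pM ⁅pH y, pM x⁆)
    (Dg Dq : g → Derivation k (MvPolynomial (ιh ⊕ ιm) k) (MvPolynomial (ιh ⊕ ιm) k))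
    (hDg : ∀ x j, Dg x (X j) = lin ⁅x, e j⁆)
    (hDq : ∀ x j, Dq x (X j) = lin (brq x (e j)))
    (w : ιh ⊕ ιm → ℕ) (hw : ∀ j, w (Sum.inl j) = 0) (hw' : ∀ j, w (Sum.inr j) = 1)
    (f : MvPolynomial (ιh ⊕ ιm) k)
    (hfinv : ∀ x : g, Dg x f = 0)
    (b : ℕ)
    (htop : ∀ j : ℕ, b < j → weightedHomogeneousComponent w j f = 0) :
    ∀ x : g, Dq x (weightedHomogeneousComponent w b f) = 0 := by
  obtain rfl : lin = e.constr k X := e.ext fun i => by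
    classical
    simp [hlin, Finsupp.single_apply, -Fintype.sum_sum_type]
  obtain rfl : pH = projH e := e.ext fun i => by
    classical
    rcases i with j | j <;> simp [hpH, Finsupp.single_apply]
  obtain rfl : pM = projM e := e.ext fun i => by
    classical
    rcases i with j | j <;> simp [hpM, Finsupp.single_apply]
  have hw_eq : (fun i => (w i : ℤ)) = mWeight := by
    ext (j | j) <;> simp [mWeight, hw, hw']
  have hf : ∀ c : ℤ, (b : ℤ) < c → weightedHomogeneousComponent mWeight c f = 0 := by
    intro c hc
    lift c to ℕ using by omega
    rw [← hw_eq, weightedHomogeneousComponent_natCast]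
    exact htop c (by omega)
  have hDg_eq : ∀ x, Dg x = derivationOfEnd e (LieAlgebra.ad k g x) := fun x =>
    derivation_ext fun i => by rw [hDg, derivationOfEnd_X, LieAlgebra.ad_apply]
  have hraise_𝔥 : ∀ x, projM e * LieAlgebra.ad k g (projH e x) * projH e = 0 := fun x =>
    LinearMap.ext fun v => projM_eq_zero_of_mem hc.disjoint he_h he_m
      (𝔥.lie_mem (projH_mem he_h x) (projH_mem he_h v))
  intro x
  rw [← weightedHomogeneousComponent_natCast, hw_eq,
    eq_derivationOfEnd_of_contraction (D := Dq x) hc.disjoint he_h he_m fun i => by rw [hDq, hbrq],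
    map_add, Derivation.add_apply,
    derivationOfEnd_diag_apply_eq_zero hf (hDg_eq (projH e x) ▸ hfinv (projH e x)) (hraise_𝔥 x),
    derivationOfEnd_raise_apply_eq_zero hf (hDg_eq (projM e x) ▸ hfinv (projM e x)), add_zero]

/-- Let `g = 𝔥 ⊕ m` with `𝔥` a subalgebra, and let
`𝔨 = 𝔥 ⋉ mᵃ` be the Inönü–Wigner contraction, with bracket
`brq x y = [pH x, pH y] + pM [pH x, pM y] − pM [pH y, pM x]`.
Model the symmetric algebra `S(g) = S(𝔨) = k[g*]` as a polynomial ring in variables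
indexed by an adapted basis `e` of `g`; the (infinitesimal) adjoint action of `g`
(resp. coadjoint action of `𝔨`) is by the derivations `Dg x` (resp. `Dq x`) with
`Dg x (X j) = lin ⁅x, e j⁆` (resp. `Dq x (X j) = lin (brq x (e j))`); for a connected
group invariance is equivalent to being killed by these derivations.
If `f ∈ S^n(g)^G` and `f^{(n-b,b)}` is its bi-homogeneous component of highest degree
`b` relative to `m` (taken with the weight `w` which is `0` on `𝔥`-variables and `1`
on `m`-variables), then `f^{(n-b,b)} ∈ S^n(𝔨)^K = k[𝔨*]^K_n`. -/
theorem statement_3 {k g : Type*} [Field k] [IsAlgClosed k] [CharZero k]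
    [LieRing g] [LieAlgebra k g] [FiniteDimensional k g]
    {ιh ιm : Type*} [Fintype ιh] [Fintype ιm] [DecidableEq ιh] [DecidableEq ιm]
    (𝔥 : LieSubalgebra k g) (m : Submodule k g)
    (hc : IsCompl 𝔥.toSubmodule m)
    (e : Module.Basis (ιh ⊕ ιm) k g)
    (he_h : ∀ j, e (Sum.inl j) ∈ 𝔥) (he_m : ∀ j, e (Sum.inr j) ∈ m)
    (lin : g →ₗ[k] MvPolynomial (ιh ⊕ ιm) k)
    (hlin : ∀ v, lin v = ∑ i, (e.repr v i) • X i)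
    (pH pM : g →ₗ[k] g)
    (hpH : ∀ v, pH v = ∑ j : ιh, e.repr v (Sum.inl j) • e (Sum.inl j))
    (hpM : ∀ v, pM v = ∑ j : ιm, e.repr v (Sum.inr j) • e (Sum.inr j))
    (brq : g → g → g)
    (hbrq : ∀ x y, brq x y = ⁅pH x, pH y⁆ + pM ⁅pH x, pM y⁆ - pM ⁅pH y, pM x⁆)
    (Dg Dq : g → Derivation k (MvPolynomial (ιh ⊕ ιm) k) (MvPolynomial (ιh ⊕ ιm) k))
    (hDg : ∀ x j, Dg x (X j) = lin ⁅x, e j⁆)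
    (hDq : ∀ x j, Dq x (X j) = lin (brq x (e j)))
    (w : ιh ⊕ ιm → ℕ) (hw : ∀ j, w (Sum.inl j) = 0) (hw' : ∀ j, w (Sum.inr j) = 1)
    (f : MvPolynomial (ιh ⊕ ιm) k) (n : ℕ) (hf : f.IsHomogeneous n)
    (hfinv : ∀ x : g, Dg x f = 0)
    (b : ℕ) (hb : weightedHomogeneousComponent w b f ≠ 0)
    (htop : ∀ j : ℕ, b < j → weightedHomogeneousComponent w j f = 0) :
    ∀ x : g, Dq x (weightedHomogeneousComponent w b f) = 0 :=
  statement_3_general 𝔥 m hc e he_h he_m lin hlin pH pM hpH hpM brq hbrq Dg Dq hDg hDq w hw hw' f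
    hfinv b htop
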